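/- arXiv:hep-th/9407145 — 2 statements merged into one kernel-verified Lean document; each statement's English description precedes it below -/
import Mathlib

section
/- Cross sections s : P → B of a quantum principal bundle P(B,A) (left B-module maps with s(1)=1, where P is viewed as the associated bundle of Lemma on im Δ_R) are in bijective correspondence with linear maps φ : A → P satisfying φ(1) = 1 and Δ_R ∘ φ = (φ ⊗ S) ∘ Δ', where Δ'(a) = a₂ ⊗ a₁. The bijection is φ ↦ id * φ (i.e., s(u) = u⁽¹⁾ φ(u⁽²⁾)) with inverse s ↦ mult ∘ (id ⊗_B s) ∘ τ. -/
open TensorProduct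

set_option synthInstance.maxHeartbeats 1000000
set_option maxHeartbeats 1600000

noncomputable section

variable (k : Type*) [Field k]

/-- Convolution product of linear maps from a coalgebra to an algebra:
`(f * g)(a) = f(a₁) g(a₂)`. -/
def conv {C B : Type*} [AddCommMonoid C] [Module k C] [Coalgebra k C]
    [Semiring B] [Algebra k B] (f g : C →ₗ[k] B) : C →ₗ[k] B :=
  LinearMap.mul' k B ∘ₗ TensorProduct.map f g ∘ₗ Coalgebra.comul

/-- The convolution unit `a ↦ ε(a) 1`. -/
def convOne {C B : Type*} [AddCommMonoid C] [Module k C] [Coalgebra k C]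
    [Semiring B] [Algebra k B] : C →ₗ[k] B :=
  Algebra.linearMap k B ∘ₗ Coalgebra.counit

variable (A P : Type*) [Ring A] [HopfAlgebra k A] [Ring P] [Algebra k P]

/-- The canonical map `χ : P ⊗ P → P ⊗ A`, `u ⊗ v ↦ u v⁽¹⁾ ⊗ v⁽²⁾`,
i.e. `χ = (mult ⊗ id) ∘ (id ⊗ Δ_R)`. -/
def chiMap (ΔR : P →ₗ[k] P ⊗[k] A) : P ⊗[k] P →ₗ[k] P ⊗[k] A :=
  TensorProduct.map (LinearMap.mul' k P) LinearMap.id ∘ₗ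
    (TensorProduct.assoc k P P A).symm.toLinearMap ∘ₗ
    TensorProduct.map LinearMap.id ΔR

/-- The right adjoint coaction `Ad(a) = a₂ ⊗ S(a₁)a₃`. -/
def adCoaction : A →ₗ[k] A ⊗[k] A :=
  TensorProduct.map LinearMap.id (LinearMap.mul' k A) ∘ₗ
    (TensorProduct.leftComm k A A A).toLinearMap ∘ₗ
    TensorProduct.map (HopfAlgebra.antipode (R := k)) LinearMap.id ∘ₗ
    TensorProduct.map LinearMap.id Coalgebra.comul ∘ₗ Coalgebra.comul

/-- The kernel of `P ⊗ P → P ⊗_B P`: the span of elements `u b ⊗ v - u ⊗ b v`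
with `b` a coinvariant (`Δ_R b = b ⊗ 1`), so that `P ⊗_B P = (P ⊗ P) ⧸ relSub`. -/
def relSub (ΔR : P →ₗ[k] P ⊗[k] A) : Submodule k (P ⊗[k] P) :=
  Submodule.span k {x | ∃ u v b : P, ΔR b = b ⊗ₜ 1 ∧ x = (u * b) ⊗ₜ v - u ⊗ₜ (b * v)}

/-- The image of `B ⊗ B` in `P ⊗ P`, where `B = Pᴬ` is the coinvariant subalgebra. -/
def BBsub (ΔR : P →ₗ[k] P ⊗[k] A) : Submodule k (P ⊗[k] P) :=
  Submodule.span k {x | ∃ b c : P, ΔR b = b ⊗ₜ 1 ∧ ΔR c = c ⊗ₜ 1 ∧ x = b ⊗ₜ c}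

/-- The submodule `P B² P ⊆ P ⊗ P`, where `B² = ker(mult : B ⊗ B → B)`. -/
def PB2P (ΔR : P →ₗ[k] P ⊗[k] A) : Submodule k (P ⊗[k] P) :=
  Submodule.span k {w | ∃ u v : P, ∃ x ∈ BBsub k A P ΔR ⊓ LinearMap.ker (LinearMap.mul' k P),
    w = TensorProduct.map (LinearMap.mulLeft k u) (LinearMap.mulRight k v) x}


section Aux
variable {k : Type*} [Field k] {A P : Type*} [Ring A] [HopfAlgebra k A] [Ring P] [Algebra k P]

/-- Factor a linear map through a surjection containing its kernel. -/
theorem aux_factor {M N Q : Type*} [AddCommGroup M] [AddCommGroup N] [AddCommGroup Q]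
    [Module k M] [Module k N] [Module k Q] (f : M →ₗ[k] N) (g : M →ₗ[k] Q)
    (hf : Function.Surjective f) (hk : LinearMap.ker f ≤ LinearMap.ker g) :
    ∃ h : N →ₗ[k] Q, h ∘ₗ f = g := by
  refine ⟨((LinearMap.ker f).liftQ g hk) ∘ₗ (f.quotKerEquivOfSurjective hf).symm.toLinearMap, ?_⟩
  ext x
  have h1 : (f.quotKerEquivOfSurjective hf) (Submodule.Quotient.mk x) = f x := rfl
  simp only [LinearMap.comp_apply, LinearEquiv.coe_coe]
  rw [← h1, LinearEquiv.symm_apply_apply]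
  simp

theorem aux_mul_tmul_one (x : P ⊗[k] A) (w : P) :
    x * (w ⊗ₜ (1 : A)) = (LinearMap.mulRight k w).rTensor A x := by
  induction x with
  | zero => simp [zero_mul]
  | tmul p a => simp [Algebra.TensorProduct.tmul_mul_tmul]
  | add x y hx hy => simp [add_mul, hx, hy]

theorem aux_tmul_one_mul (b : P) (x : P ⊗[k] A) :
    (b ⊗ₜ (1 : A)) * x = (LinearMap.mulLeft k b).rTensor A x := by
  induction x with
  | zero => simp [mul_zero]
  | tmul p a => simp [Algebra.TensorProduct.tmul_mul_tmul]
  | add x y hx hy => simp [mul_add, hx, hy]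

theorem aux_chi_tmul (ΔR : P →ₗ[k] P ⊗[k] A) (u v : P) :
    chiMap k A P ΔR (u ⊗ₜ v) = (LinearMap.mulLeft k u).rTensor A (ΔR v) := by
  rw [chiMap]
  simp only [LinearMap.comp_apply, TensorProduct.map_tmul, LinearMap.id_apply,
    LinearEquiv.coe_coe]
  generalize ΔR v = y
  induction y with
  | zero => simp only [tmul_zero, LinearEquiv.map_zero, map_zero]
  | tmul p a =>
      simp only [TensorProduct.assoc_symm_tmul, TensorProduct.map_tmul,
        LinearMap.rTensor_tmul, LinearMap.mul'_apply, LinearMap.id_apply,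
        LinearMap.mulLeft_apply]
  | add x y hx hy =>
      simp only [tmul_add, LinearEquiv.map_add, map_add, hx, hy]

end Aux

section Aux2
variable {k : Type*} [Field k] {A P : Type*} [Ring A] [HopfAlgebra k A] [Ring P] [Algebra k P]

theorem aux_mul_eq_of_chi (ΔR : P →ₗ[k] P ⊗[k] A)
    (hcounit : ∀ u : P, TensorProduct.map LinearMap.id Coalgebra.counit (ΔR u) = u ⊗ₜ (1 : k))
    (x : P ⊗[k] P) :
    LinearMap.mul' k P x
      = (TensorProduct.rid k P)
          (TensorProduct.map LinearMap.id Coalgebra.counit (chiMap k A P ΔR x)) := by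
  induction x with
  | zero => simp
  | tmul u v =>
      rw [aux_chi_tmul]
      have hcomm : ∀ y : P ⊗[k] A,
          TensorProduct.map LinearMap.id Coalgebra.counit ((LinearMap.mulLeft k u).rTensor A y)
            = (LinearMap.mulLeft k u).rTensor k
                (TensorProduct.map LinearMap.id Coalgebra.counit y) := by
        intro y
        induction y with
        | zero => simp
        | tmul p a => simp
        | add x y hx hy => simp [hx, hy]
      rw [hcomm, hcounit v]
      simp
  | add x y hx hy => simp [hx, hy]

theorem aux_ker_chi_eq (ΔR : P →ₗ[k] P ⊗[k] A)
    (hcounit : ∀ u : P, TensorProduct.map LinearMap.id Coalgebra.counit (ΔR u) = u ⊗ₜ (1 : k))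
    (hexact : LinearMap.ker (chiMap k A P ΔR) ⊓ LinearMap.ker (LinearMap.mul' k P)
      = PB2P k A P ΔR) :
    LinearMap.ker (chiMap k A P ΔR) = PB2P k A P ΔR := by
  rw [← hexact]
  refine (inf_eq_left.mpr ?_).symm
  intro x hx
  simp only [LinearMap.mem_ker] at hx ⊢
  rw [aux_mul_eq_of_chi (k := k) (A := A) ΔR hcounit x, hx]
  simp

theorem aux_ker_chi_le_ker_g (ΔR : P →ₗ[k] P ⊗[k] A)
    (hcounit : ∀ u : P, TensorProduct.map LinearMap.id Coalgebra.counit (ΔR u) = u ⊗ₜ (1 : k))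
    (hexact : LinearMap.ker (chiMap k A P ΔR) ⊓ LinearMap.ker (LinearMap.mul' k P)
      = PB2P k A P ΔR)
    (s : P →ₗ[k] P)
    (hs3 : ∀ b : P, ΔR b = b ⊗ₜ 1 → ∀ u : P, s (b * u) = b * s u) :
    LinearMap.ker (chiMap k A P ΔR)
      ≤ LinearMap.ker (LinearMap.mul' k P ∘ₗ TensorProduct.map LinearMap.id s) := by
  rw [aux_ker_chi_eq (k := k) (A := A) ΔR hcounit hexact, PB2P, Submodule.span_le]
  rintro w ⟨u, v, x, hx, rfl⟩
  have key : ∀ y ∈ BBsub k A P ΔR,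
      LinearMap.mul' k P (TensorProduct.map LinearMap.id s
        (TensorProduct.map (LinearMap.mulLeft k u) (LinearMap.mulRight k v) y))
        = u * (LinearMap.mul' k P y * s v) := by
    intro y hy
    induction hy using Submodule.span_induction with
    | mem y hy =>
        obtain ⟨b, c, hb, hc, rfl⟩ := hy
        simp only [TensorProduct.map_tmul, LinearMap.mulLeft_apply, LinearMap.mulRight_apply,
          LinearMap.id_apply, LinearMap.mul'_apply]
        rw [hs3 c hc v]
        simp [mul_assoc]
    | zero => simp
    | add y z hy hz h1 h2 => simp [h1, h2, mul_add, add_mul]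
    | smul a y hy h1 =>
        simp only [map_smul, LinearMap.smul_apply, h1, smul_mul_assoc, mul_smul_comm]
  simp only [SetLike.mem_coe, LinearMap.mem_ker, LinearMap.comp_apply]
  rw [key x hx.1]
  have := hx.2
  rw [this]
  simp

end Aux2

section Aux3
variable {k : Type*} [Field k] {A : Type*} [Ring A] [HopfAlgebra k A]

/-- `x ⊗ (y ⊗ z) ↦ z ⊗ (x * y)`. -/
def auxG (k A : Type*) [Field k] [Ring A] [Algebra k A] :
    A ⊗[k] (A ⊗[k] A) →ₗ[k] A ⊗[k] A :=
  (TensorProduct.comm k A A).toLinearMap ∘ₗ (LinearMap.mul' k A).rTensor A ∘ₗ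
    (TensorProduct.assoc k A A A).symm.toLinearMap

@[simp] theorem auxG_tmul (x y z : A) :
    auxG k A (x ⊗ₜ (y ⊗ₜ z)) = z ⊗ₜ (x * y) := by
  simp [auxG]

/-- `a ↦ a₍₂₎₍₂₎ ⊗ a₍₁₎ S(a₍₂₎₍₁₎)`. -/
def auxNu (k A : Type*) [Field k] [Ring A] [HopfAlgebra k A] : A →ₗ[k] A ⊗[k] A :=
  auxG k A ∘ₗ
    (LinearMap.lTensor A (((HopfAlgebra.antipode (R := k) (A := A)).rTensor A) ∘ₗ
      Coalgebra.comul)) ∘ₗ Coalgebra.comul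

theorem auxNu_apply (a : A) : auxNu k A a = a ⊗ₜ 1 := by
  have I1 : (auxG k A ∘ₗ LinearMap.lTensor A
        ((HopfAlgebra.antipode (R := k) (A := A)).rTensor A)) ∘ₗ
        (TensorProduct.assoc k A A A).toLinearMap
      = (TensorProduct.comm k A A).toLinearMap ∘ₗ
        ((LinearMap.mul' k A ∘ₗ
          (HopfAlgebra.antipode (R := k) (A := A)).lTensor A).rTensor A) := by
    apply TensorProduct.ext_threefold
    intro x y z
    simp [auxG]
  have h0 : auxNu k A a
      = auxG k A ((LinearMap.lTensor A
          ((HopfAlgebra.antipode (R := k) (A := A)).rTensor A))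
          ((LinearMap.lTensor A Coalgebra.comul) (Coalgebra.comul a))) := by
    simp only [auxNu, LinearMap.comp_apply, LinearMap.lTensor_comp, LinearMap.comp_apply]
  rw [h0, ← Coalgebra.coassoc_apply]
  have h1 := LinearMap.congr_fun I1
    ((Coalgebra.comul (R := k) (A := A)).rTensor A (Coalgebra.comul a))
  simp only [LinearMap.comp_apply, LinearEquiv.coe_coe] at h1
  rw [h1]
  rw [← LinearMap.comp_apply, ← LinearMap.rTensor_comp]
  have h2 : (LinearMap.mul' k A ∘ₗ
        (HopfAlgebra.antipode (R := k) (A := A)).lTensor A) ∘ₗ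
        (Coalgebra.comul (R := k) (A := A))
      = Algebra.linearMap k A ∘ₗ Coalgebra.counit := by
    rw [LinearMap.comp_assoc]
    exact HopfAlgebra.mul_antipode_lTensor_comul
  rw [h2, LinearMap.rTensor_comp, LinearMap.comp_apply]
  rw [Coalgebra.rTensor_counit_comul]
  simp

end Aux3

section Aux4
variable {k : Type*} [Field k] {A P : Type*} [Ring A] [HopfAlgebra k A] [Ring P] [Algebra k P]

/-- `u ⊗ v ↦ u₍₀₎ ⊗ v ⊗ u₍₁₎`. -/
def auxL (ΔR : P →ₗ[k] P ⊗[k] A) : P ⊗[k] P →ₗ[k] (P ⊗[k] P) ⊗[k] A :=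
  (TensorProduct.assoc k P P A).symm.toLinearMap ∘ₗ
    LinearMap.lTensor P (TensorProduct.comm k A P).toLinearMap ∘ₗ
    (TensorProduct.assoc k P A P).toLinearMap ∘ₗ ΔR.rTensor P

/-- `(p ⊗ a) ⊗ (q ⊗ b) ↦ ((p q) ⊗ b) ⊗ a`. -/
def auxXi (k A P : Type*) [Field k] [Ring A] [Algebra k A] [Ring P] [Algebra k P] :
    (P ⊗[k] A) ⊗[k] (P ⊗[k] A) →ₗ[k] (P ⊗[k] A) ⊗[k] A :=
  (TensorProduct.comm k A (P ⊗[k] A)).toLinearMap ∘ₗ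
    LinearMap.lTensor A ((LinearMap.mul' k P).rTensor A ∘ₗ
      (TensorProduct.assoc k P P A).symm.toLinearMap) ∘ₗ
    (TensorProduct.assoc k A P (P ⊗[k] A)).toLinearMap ∘ₗ
    TensorProduct.map (TensorProduct.comm k P A).toLinearMap LinearMap.id

@[simp] theorem auxXi_tmul (p q : P) (a b : A) :
    auxXi k A P ((p ⊗ₜ a) ⊗ₜ (q ⊗ₜ b)) = ((p * q) ⊗ₜ b) ⊗ₜ a := by
  simp [auxXi]

/-- `(p ⊗ b) ⊗ c ↦ (p ⊗ c₍₂₎) ⊗ (b S(c₍₁₎))`. -/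
def auxF (k A P : Type*) [Field k] [Ring A] [HopfAlgebra k A] [Ring P] [Algebra k P] :
    (P ⊗[k] A) ⊗[k] A →ₗ[k] (P ⊗[k] A) ⊗[k] A :=
  (TensorProduct.assoc k P A A).symm.toLinearMap ∘ₗ
    LinearMap.lTensor P (auxG k A) ∘ₗ
    (TensorProduct.assoc k P A (A ⊗[k] A)).toLinearMap ∘ₗ
    LinearMap.lTensor (P ⊗[k] A)
      (((HopfAlgebra.antipode (R := k) (A := A)).rTensor A) ∘ₗ Coalgebra.comul)

theorem aux_A1 (ΔR : P →ₗ[k] P ⊗[k] A) (u v : P) :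
    (chiMap k A P ΔR).rTensor A (auxL ΔR (u ⊗ₜ v))
      = auxXi k A P (ΔR u ⊗ₜ ΔR v) := by
  rw [auxL]
  simp only [LinearMap.comp_apply, LinearMap.rTensor_tmul, LinearEquiv.coe_coe,
    LinearMap.id_apply]
  generalize ΔR u = x
  induction x with
  | zero => simp
  | tmul p a =>
      simp only [TensorProduct.assoc_tmul, LinearMap.lTensor_tmul, LinearEquiv.coe_coe,
        TensorProduct.comm_tmul, TensorProduct.assoc_symm_tmul, LinearMap.rTensor_tmul]
      rw [aux_chi_tmul]
      generalize ΔR v = y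
      induction y with
      | zero => simp
      | tmul q b => simp
      | add y z hy hz => simp only [map_add, tmul_add, add_tmul, hy, hz]
  | add x y hx hy =>
      simp only [map_add, add_tmul, tmul_add, hx, hy]

end Aux4

section Aux5
variable {k : Type*} [Field k] {A P : Type*} [Ring A] [HopfAlgebra k A] [Ring P] [Algebra k P]

theorem aux_mulLeft_add {R : Type*} [CommSemiring R] {B : Type*} [Ring B] [Algebra R B]
    (x y : B) : LinearMap.mulLeft R (x + y) = LinearMap.mulLeft R x + LinearMap.mulLeft R y :=
  LinearMap.ext fun z => add_mul x y z

theorem aux_FC1 (p : P) (a : A) (q : P) (t : A ⊗[k] A) :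
    auxF k A P ((LinearMap.mulLeft k (p ⊗ₜ[k] a)).rTensor A
        ((TensorProduct.assoc k P A A).symm (q ⊗ₜ t)))
      = TensorProduct.map (TensorProduct.mk k P A (p * q)) (LinearMap.mulLeft k a)
          (auxG k A ((LinearMap.lTensor A
            (((HopfAlgebra.antipode (R := k) (A := A)).rTensor A) ∘ₗ Coalgebra.comul)) t)) := by
  induction t with
  | zero => simp
  | tmul c d =>
      simp only [TensorProduct.assoc_symm_tmul, LinearMap.rTensor_tmul,
        LinearMap.mulLeft_apply, Algebra.TensorProduct.tmul_mul_tmul,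
        LinearMap.lTensor_tmul, LinearMap.comp_apply]
      rw [auxF]
      simp only [LinearMap.comp_apply, LinearEquiv.coe_coe, LinearMap.lTensor_tmul]
      generalize (HopfAlgebra.antipode (R := k) (A := A)).rTensor A (Coalgebra.comul d) = w
      induction w with
      | zero => simp
      | tmul e f =>
          simp only [TensorProduct.assoc_tmul, LinearMap.lTensor_tmul, auxG_tmul,
            TensorProduct.assoc_symm_tmul, TensorProduct.map_tmul, TensorProduct.mk_apply,
            LinearMap.mulLeft_apply, mul_assoc]
      | add w₁ w₂ h1 h2 =>
          simp only [tmul_add, map_add, h1, h2]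
  | add t₁ t₂ h1 h2 =>
      simp only [tmul_add, map_add, h1, h2]

theorem aux_FC (x y : P ⊗[k] A) :
    auxF k A P ((LinearMap.mulLeft k x).rTensor A
        ((TensorProduct.assoc k P A A).symm
          ((Coalgebra.comul (R := k) (A := A)).lTensor P y)))
      = auxXi k A P (x ⊗ₜ y) := by
  induction x with
  | zero =>
      simp [LinearMap.mulLeft_zero_eq_zero, LinearMap.rTensor_zero]
  | tmul p a =>
      induction y with
      | zero => simp
      | tmul q b =>
          simp only [LinearMap.lTensor_tmul]
          rw [aux_FC1]
          have := auxNu_apply (k := k) (A := A) b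
          rw [auxNu] at this
          simp only [LinearMap.comp_apply] at this
          rw [this]
          simp
      | add y₁ y₂ h1 h2 => simp only [map_add, tmul_add, h1, h2]
  | add x₁ x₂ h1 h2 =>
      simp only [aux_mulLeft_add, LinearMap.rTensor_add, LinearMap.add_apply, map_add,
        add_tmul, h1, h2]

end Aux5

section Aux6
variable {k : Type*} [Field k] {A P : Type*} [Ring A] [HopfAlgebra k A] [Ring P] [Algebra k P]

theorem aux_A2 (ΔR : P →ₗ[k] P ⊗[k] A)
    (hmul : ∀ u v : P, ΔR (u * v) = ΔR u * ΔR v)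
    (hcoassoc : ∀ u : P, TensorProduct.map ΔR LinearMap.id (ΔR u)
      = (TensorProduct.assoc k P A A).symm (TensorProduct.map LinearMap.id Coalgebra.comul (ΔR u)))
    (u v : P) :
    auxXi k A P (ΔR u ⊗ₜ ΔR v) = auxF k A P ((ΔR.rTensor A) (chiMap k A P ΔR (u ⊗ₜ v))) := by
  have hcomp : ΔR ∘ₗ LinearMap.mulLeft k u = LinearMap.mulLeft k (ΔR u) ∘ₗ ΔR :=
    LinearMap.ext fun p => hmul u p
  have step : (ΔR.rTensor A) ((LinearMap.mulLeft k u).rTensor A (ΔR v))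
      = ((LinearMap.mulLeft k (ΔR u)).rTensor A) (ΔR.rTensor A (ΔR v)) := by
    rw [← LinearMap.comp_apply, ← LinearMap.rTensor_comp, hcomp, LinearMap.rTensor_comp,
      LinearMap.comp_apply]
  rw [aux_chi_tmul, step]
  have hco : ΔR.rTensor A (ΔR v)
      = (TensorProduct.assoc k P A A).symm
          ((Coalgebra.comul (R := k) (A := A)).lTensor P (ΔR v)) := hcoassoc v
  rw [hco, aux_FC]

theorem aux_M (ΔR : P →ₗ[k] P ⊗[k] A)
    (hmul : ∀ u v : P, ΔR (u * v) = ΔR u * ΔR v)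
    (hcoassoc : ∀ u : P, TensorProduct.map ΔR LinearMap.id (ΔR u)
      = (TensorProduct.assoc k P A A).symm (TensorProduct.map LinearMap.id Coalgebra.comul (ΔR u)))
    (w : P ⊗[k] P) :
    (chiMap k A P ΔR).rTensor A (auxL ΔR w)
      = auxF k A P ((ΔR.rTensor A) (chiMap k A P ΔR w)) := by
  induction w with
  | zero => simp
  | tmul u v => rw [aux_A1, aux_A2 (k := k) ΔR hmul hcoassoc]
  | add w₁ w₂ h1 h2 => simp only [map_add, h1, h2]

theorem aux_G' (a : A) :
    auxF k A P (((1 : P) ⊗ₜ (1 : A)) ⊗ₜ a)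
      = TensorProduct.map (TensorProduct.mk k P A 1) (HopfAlgebra.antipode (R := k) (A := A))
          (TensorProduct.comm k A A (Coalgebra.comul a)) := by
  rw [auxF]
  simp only [LinearMap.comp_apply, LinearMap.lTensor_tmul, LinearEquiv.coe_coe]
  generalize Coalgebra.comul (R := k) a = t
  induction t with
  | zero => simp
  | tmul c d =>
      simp only [LinearMap.rTensor_tmul, TensorProduct.assoc_tmul, LinearMap.lTensor_tmul,
        auxG_tmul, one_mul, TensorProduct.assoc_symm_tmul, TensorProduct.comm_tmul,
        TensorProduct.map_tmul, TensorProduct.mk_apply]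
  | add t₁ t₂ h1 h2 => simp only [map_add, tmul_add, h1, h2]

/-- `a ↦ φ(a₂) ⊗ S(a₁)`. -/
def hmapOf (φ : A →ₗ[k] P) : A →ₗ[k] P ⊗[k] A :=
  TensorProduct.map φ (HopfAlgebra.antipode (R := k) (A := A)) ∘ₗ
    (TensorProduct.comm k A A).toLinearMap ∘ₗ Coalgebra.comul

theorem aux_C3' (φ : A →ₗ[k] P) (p : P) (c : A) (w : A ⊗[k] A) :
    (p ⊗ₜ c) * (TensorProduct.map φ (HopfAlgebra.antipode (R := k) (A := A))
        (TensorProduct.comm k A A w))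
      = TensorProduct.map (LinearMap.mulLeft k p ∘ₗ φ) LinearMap.id
          (auxG k A (c ⊗ₜ ((HopfAlgebra.antipode (R := k) (A := A)).rTensor A w))) := by
  induction w with
  | zero => simp
  | tmul e f =>
      simp only [TensorProduct.comm_tmul, TensorProduct.map_tmul, LinearMap.rTensor_tmul,
        LinearMap.lTensor_tmul, Algebra.TensorProduct.tmul_mul_tmul, auxG_tmul,
        LinearMap.comp_apply, LinearMap.mulLeft_apply, LinearMap.id_apply]
  | add w₁ w₂ h1 h2 =>
      simp only [map_add, tmul_add, mul_add, h1, h2]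

theorem aux_C3 (φ : A →ₗ[k] P) (p : P) (t : A ⊗[k] A) :
    LinearMap.mul' k (P ⊗[k] A) ((hmapOf φ).lTensor (P ⊗[k] A)
        ((TensorProduct.assoc k P A A).symm (p ⊗ₜ t)))
      = TensorProduct.map (LinearMap.mulLeft k p ∘ₗ φ) LinearMap.id
          (auxG k A ((LinearMap.lTensor A
            (((HopfAlgebra.antipode (R := k) (A := A)).rTensor A) ∘ₗ Coalgebra.comul)) t)) := by
  induction t with
  | zero => simp
  | tmul c d =>
      simp only [TensorProduct.assoc_symm_tmul, LinearMap.lTensor_tmul, LinearMap.mul'_apply,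
        LinearMap.comp_apply]
      rw [hmapOf]
      simp only [LinearMap.comp_apply, LinearEquiv.coe_coe]
      exact aux_C3' φ p c (Coalgebra.comul d)
  | add t₁ t₂ h1 h2 =>
      simp only [tmul_add, map_add, h1, h2]

theorem aux_C2 (φ : A →ₗ[k] P) (y : P ⊗[k] A) :
    LinearMap.mul' k (P ⊗[k] A) ((hmapOf φ).lTensor (P ⊗[k] A)
        ((TensorProduct.assoc k P A A).symm
          ((Coalgebra.comul (R := k) (A := A)).lTensor P y)))
      = (LinearMap.mul' k P (TensorProduct.map LinearMap.id φ y)) ⊗ₜ (1 : A) := by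
  induction y with
  | zero => simp
  | tmul p a =>
      simp only [LinearMap.lTensor_tmul]
      rw [aux_C3]
      have := auxNu_apply (k := k) (A := A) a
      rw [auxNu] at this
      simp only [LinearMap.comp_apply] at this
      rw [this]
      simp
  | add y₁ y₂ h1 h2 =>
      simp only [map_add, h1, h2, add_tmul]

end Aux6

section Aux7
variable {k : Type*} [Field k] {A P : Type*} [Ring A] [HopfAlgebra k A] [Ring P] [Algebra k P]

theorem aux_fwd_coinv (ΔR : P →ₗ[k] P ⊗[k] A)
    (hcoassoc : ∀ u : P, TensorProduct.map ΔR LinearMap.id (ΔR u)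
      = (TensorProduct.assoc k P A A).symm (TensorProduct.map LinearMap.id Coalgebra.comul (ΔR u)))
    (hmul : ∀ u v : P, ΔR (u * v) = ΔR u * ΔR v)
    (φ : A →ₗ[k] P)
    (hφ2 : ∀ a : A, ΔR (φ a)
      = TensorProduct.map φ (HopfAlgebra.antipode (R := k) (A := A))
          (TensorProduct.comm k A A (Coalgebra.comul a)))
    (u : P) :
    ΔR (LinearMap.mul' k P (TensorProduct.map LinearMap.id φ (ΔR u)))
      = (LinearMap.mul' k P (TensorProduct.map LinearMap.id φ (ΔR u))) ⊗ₜ (1 : A) := by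
  have hφcomp : ΔR ∘ₗ φ = hmapOf φ := LinearMap.ext fun a => by
    simpa [hmapOf] using hφ2 a
  have C1 : ∀ y : P ⊗[k] A,
      ΔR (LinearMap.mul' k P (TensorProduct.map LinearMap.id φ y))
        = LinearMap.mul' k (P ⊗[k] A) (TensorProduct.map ΔR (ΔR ∘ₗ φ) y) := by
    intro y
    induction y with
    | zero => simp
    | tmul p a =>
        simp only [TensorProduct.map_tmul, LinearMap.mul'_apply, LinearMap.id_apply,
          LinearMap.comp_apply]
        rw [hmul]
    | add y₁ y₂ h1 h2 => simp only [map_add, h1, h2]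
  rw [C1 (ΔR u), hφcomp]
  have split : TensorProduct.map ΔR (hmapOf φ) (ΔR u)
      = (hmapOf φ).lTensor (P ⊗[k] A) (ΔR.rTensor A (ΔR u)) := by
    rw [← LinearMap.lTensor_comp_rTensor, LinearMap.comp_apply]
  rw [split]
  have hco : ΔR.rTensor A (ΔR u)
      = (TensorProduct.assoc k P A A).symm
          ((Coalgebra.comul (R := k) (A := A)).lTensor P (ΔR u)) := hcoassoc u
  rw [hco, aux_C2]

theorem aux_fwd_blin (ΔR : P →ₗ[k] P ⊗[k] A)
    (hmul : ∀ u v : P, ΔR (u * v) = ΔR u * ΔR v)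
    (φ : A →ₗ[k] P) (b : P) (hb : ΔR b = b ⊗ₜ 1) (u : P) :
    LinearMap.mul' k P (TensorProduct.map LinearMap.id φ (ΔR (b * u)))
      = b * LinearMap.mul' k P (TensorProduct.map LinearMap.id φ (ΔR u)) := by
  rw [hmul b u, hb, aux_tmul_one_mul]
  generalize ΔR u = y
  induction y with
  | zero => simp
  | tmul p a => simp [mul_assoc]
  | add y₁ y₂ h1 h2 => simp only [map_add, h1, h2, mul_add]

end Aux7

section Aux8
variable {k : Type*} [Field k] {A P : Type*} [Ring A] [HopfAlgebra k A] [Ring P] [Algebra k P]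

theorem aux_D1 (ΔR : P →ₗ[k] P ⊗[k] A)
    (hmul : ∀ u v : P, ΔR (u * v) = ΔR u * ΔR v)
    (s : P →ₗ[k] P) (hs1 : ∀ u : P, ΔR (s u) = s u ⊗ₜ 1) (w : P ⊗[k] P) :
    ΔR (LinearMap.mul' k P (TensorProduct.map LinearMap.id s w))
      = ((LinearMap.mul' k P ∘ₗ TensorProduct.map LinearMap.id s).rTensor A)
          (auxL ΔR w) := by
  induction w with
  | zero => simp
  | tmul u v =>
      have lhs : ΔR (LinearMap.mul' k P (TensorProduct.map LinearMap.id s (u ⊗ₜ v)))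
          = (LinearMap.mulRight k (s v)).rTensor A (ΔR u) := by
        simp only [TensorProduct.map_tmul, LinearMap.mul'_apply, LinearMap.id_apply]
        rw [hmul, hs1 v, aux_mul_tmul_one]
      rw [lhs, auxL]
      simp only [LinearMap.comp_apply, LinearMap.rTensor_tmul, LinearEquiv.coe_coe]
      generalize ΔR u = x
      induction x with
      | zero => simp
      | tmul p a =>
          simp only [TensorProduct.assoc_tmul, LinearMap.lTensor_tmul, LinearEquiv.coe_coe,
            TensorProduct.comm_tmul, TensorProduct.assoc_symm_tmul, LinearMap.rTensor_tmul,
            LinearMap.comp_apply, TensorProduct.map_tmul, LinearMap.mul'_apply,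
            LinearMap.id_apply, LinearMap.mulRight_apply]
      | add x₁ x₂ h1 h2 => simp only [add_tmul, map_add, h1, h2]
  | add w₁ w₂ h1 h2 => simp only [map_add, h1, h2]

theorem aux_bwd_cov (ΔR : P →ₗ[k] P ⊗[k] A)
    (hcoassoc : ∀ u : P, TensorProduct.map ΔR LinearMap.id (ΔR u)
      = (TensorProduct.assoc k P A A).symm (TensorProduct.map LinearMap.id Coalgebra.comul (ΔR u)))
    (hone : ΔR 1 = 1)
    (hmul : ∀ u v : P, ΔR (u * v) = ΔR u * ΔR v)
    (σ : A →ₗ[k] P ⊗[k] P)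
    (hσ : ∀ a : A, chiMap k A P ΔR (σ a) = (1 : P) ⊗ₜ a)
    (s : P →ₗ[k] P) (hs1 : ∀ u : P, ΔR (s u) = s u ⊗ₜ 1)
    (h : P ⊗[k] A →ₗ[k] P)
    (hh : h ∘ₗ chiMap k A P ΔR = LinearMap.mul' k P ∘ₗ TensorProduct.map LinearMap.id s)
    (a : A) :
    ΔR (LinearMap.mul' k P (TensorProduct.map LinearMap.id s (σ a)))
      = TensorProduct.map (LinearMap.mul' k P ∘ₗ TensorProduct.map LinearMap.id s ∘ₗ σ)
          (HopfAlgebra.antipode (R := k) (A := A))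
          (TensorProduct.comm k A A (Coalgebra.comul a)) := by
  have hβ : h ∘ₗ TensorProduct.mk k P A 1
      = LinearMap.mul' k P ∘ₗ TensorProduct.map LinearMap.id s ∘ₗ σ := by
    apply LinearMap.ext; intro b
    have := LinearMap.congr_fun hh (σ b)
    simp only [LinearMap.comp_apply] at this ⊢
    rw [TensorProduct.mk_apply, ← hσ b, this]
  have step1 := aux_D1 (k := k) ΔR hmul s hs1 (σ a)
  rw [step1]
  have step2 : (LinearMap.mul' k P ∘ₗ TensorProduct.map LinearMap.id s).rTensor A (auxL ΔR (σ a))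
      = h.rTensor A ((chiMap k A P ΔR).rTensor A (auxL ΔR (σ a))) := by
    rw [← hh, LinearMap.rTensor_comp, LinearMap.comp_apply]
  rw [step2, aux_M (k := k) ΔR hmul hcoassoc, hσ a]
  have step3 : ΔR.rTensor A ((1 : P) ⊗ₜ[k] a) = ((1 : P) ⊗ₜ (1 : A)) ⊗ₜ a := by
    rw [LinearMap.rTensor_tmul, hone, Algebra.TensorProduct.one_def]
  rw [step3, aux_G']
  have step4 : h.rTensor A (TensorProduct.map (TensorProduct.mk k P A 1)
        (HopfAlgebra.antipode (R := k) (A := A))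
        (TensorProduct.comm k A A (Coalgebra.comul a)))
      = TensorProduct.map (h ∘ₗ TensorProduct.mk k P A 1)
          (HopfAlgebra.antipode (R := k) (A := A))
          (TensorProduct.comm k A A (Coalgebra.comul a)) := by
    rw [← LinearMap.comp_apply]
    congr 1
    rw [LinearMap.rTensor, ← TensorProduct.map_comp, LinearMap.id_comp]
  rw [step4, hβ]

theorem aux_linv (ΔR : P →ₗ[k] P ⊗[k] A)
    (σ : A →ₗ[k] P ⊗[k] P)
    (hσ : ∀ a : A, chiMap k A P ΔR (σ a) = (1 : P) ⊗ₜ a)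
    (φ : A →ₗ[k] P) (a : A) :
    LinearMap.mul' k P (TensorProduct.map LinearMap.id
        (LinearMap.mul' k P ∘ₗ TensorProduct.map LinearMap.id φ ∘ₗ ΔR) (σ a))
      = φ a := by
  have E1 : ∀ w : P ⊗[k] P,
      LinearMap.mul' k P (TensorProduct.map LinearMap.id
        (LinearMap.mul' k P ∘ₗ TensorProduct.map LinearMap.id φ ∘ₗ ΔR) w)
        = LinearMap.mul' k P (TensorProduct.map LinearMap.id φ (chiMap k A P ΔR w)) := by
    intro w
    induction w with
    | zero => simp
    | tmul u v =>
        rw [aux_chi_tmul]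
        simp only [TensorProduct.map_tmul, LinearMap.mul'_apply, LinearMap.id_apply,
          LinearMap.comp_apply]
        generalize ΔR v = y
        induction y with
        | zero => simp
        | tmul q b => simp [mul_assoc]
        | add y₁ y₂ h1 h2 => simp only [map_add, h1, h2, mul_add]
    | add w₁ w₂ h1 h2 => simp only [map_add, h1, h2]
  rw [E1 (σ a), hσ a]
  simp

theorem aux_rinv (ΔR : P →ₗ[k] P ⊗[k] A)
    (hone : ΔR 1 = 1)
    (σ : A →ₗ[k] P ⊗[k] P)
    (hσ : ∀ a : A, chiMap k A P ΔR (σ a) = (1 : P) ⊗ₜ a)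
    (s : P →ₗ[k] P)
    (h : P ⊗[k] A →ₗ[k] P)
    (hh : h ∘ₗ chiMap k A P ΔR = LinearMap.mul' k P ∘ₗ TensorProduct.map LinearMap.id s)
    (u : P) :
    LinearMap.mul' k P (TensorProduct.map LinearMap.id
        (LinearMap.mul' k P ∘ₗ TensorProduct.map LinearMap.id s ∘ₗ σ) (ΔR u))
      = s u := by
  have sub : ∀ (p : P) (z : P ⊗[k] P),
      chiMap k A P ΔR ((LinearMap.mul' k P).rTensor P
        ((TensorProduct.assoc k P P P).symm (p ⊗ₜ z)))
        = (LinearMap.mulLeft k p).rTensor A (chiMap k A P ΔR z) := by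
    intro p z
    induction z with
    | zero => simp
    | tmul x y =>
        simp only [TensorProduct.assoc_symm_tmul, LinearMap.rTensor_tmul, LinearMap.mul'_apply]
        rw [aux_chi_tmul, aux_chi_tmul, LinearMap.mulLeft_mul, LinearMap.rTensor_comp,
          LinearMap.comp_apply]
    | add z₁ z₂ h1 h2 => simp only [tmul_add, map_add, h1, h2]
  have E2 : ∀ y : P ⊗[k] A,
      LinearMap.mul' k P (TensorProduct.map LinearMap.id
        (LinearMap.mul' k P ∘ₗ TensorProduct.map LinearMap.id s ∘ₗ σ) y)
        = (LinearMap.mul' k P) (TensorProduct.map LinearMap.id s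
            ((LinearMap.mul' k P).rTensor P
              ((TensorProduct.assoc k P P P).symm (σ.lTensor P y)))) := by
    intro y
    induction y with
    | zero => simp
    | tmul p a =>
        simp only [TensorProduct.map_tmul, LinearMap.mul'_apply, LinearMap.id_apply,
          LinearMap.comp_apply, LinearMap.lTensor_tmul]
        generalize σ a = z
        induction z with
        | zero => simp
        | tmul x y' => simp [mul_assoc]
        | add z₁ z₂ h1 h2 => simp only [tmul_add, map_add, h1, h2, mul_add]
    | add y₁ y₂ h1 h2 => simp only [map_add, h1, h2]
  have E3 : chiMap k A P ΔR ((LinearMap.mul' k P).rTensor P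
      ((TensorProduct.assoc k P P P).symm (σ.lTensor P (ΔR u)))) = ΔR u := by
    generalize ΔR u = y
    induction y with
    | zero => simp
    | tmul p a =>
        simp only [LinearMap.lTensor_tmul]
        rw [sub p (σ a), hσ a]
        simp
    | add y₁ y₂ h1 h2 => simp only [map_add, h1, h2]
  rw [E2 (ΔR u)]
  have := LinearMap.congr_fun hh ((LinearMap.mul' k P).rTensor P
      ((TensorProduct.assoc k P P P).symm (σ.lTensor P (ΔR u))))
  simp only [LinearMap.comp_apply] at this
  rw [← this, E3]
  have h2 := LinearMap.congr_fun hh ((1 : P) ⊗ₜ[k] u)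
  simp only [LinearMap.comp_apply] at h2
  have h3 : chiMap k A P ΔR ((1 : P) ⊗ₜ[k] u) = ΔR u := by
    rw [aux_chi_tmul, LinearMap.mulLeft_one, LinearMap.rTensor_id, LinearMap.id_apply]
  rw [h3] at h2
  rw [h2]
  simp

end Aux8
/-- Corollary 4.5: cross sections `s : P → B` of a quantum principal bundle `P(B,A)`
are in bijective correspondence with linear maps `φ : A → P` with `φ(1) = 1` and
`Δ_R ∘ φ = (φ ⊗ S) ∘ Δ'`; the bijection is `φ ↦ id * φ` with inverse
`s ↦ mult ∘ (id ⊗_B s) ∘ τ` (here `σ` is any lift of the translation map `τ`). -/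
theorem sections_principal_bundle
    (ΔR : P →ₗ[k] P ⊗[k] A)
    (hcounit : ∀ u : P, TensorProduct.map LinearMap.id Coalgebra.counit (ΔR u) = u ⊗ₜ (1 : k))
    (hcoassoc : ∀ u : P, TensorProduct.map ΔR LinearMap.id (ΔR u)
      = (TensorProduct.assoc k P A A).symm (TensorProduct.map LinearMap.id Coalgebra.comul (ΔR u)))
    (hone : ΔR 1 = 1)
    (hmul : ∀ u v : P, ΔR (u * v) = ΔR u * ΔR v)
    (hfree : Function.Surjective (chiMap k A P ΔR))
    (hexact : LinearMap.ker (chiMap k A P ΔR) ⊓ LinearMap.ker (LinearMap.mul' k P)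
      = PB2P k A P ΔR)
    (σ : A →ₗ[k] P ⊗[k] P)
    (hσ : ∀ a : A, chiMap k A P ΔR (σ a) = (1 : P) ⊗ₜ a) :
    ∃ e : {φ : A →ₗ[k] P // φ 1 = 1 ∧
            ∀ a : A, ΔR (φ a)
              = TensorProduct.map φ (HopfAlgebra.antipode (R := k) (A := A))
                  (TensorProduct.comm k A A (Coalgebra.comul a))} ≃
          {s : P →ₗ[k] P //
            (∀ u : P, ΔR (s u) = s u ⊗ₜ 1) ∧ s 1 = 1 ∧
            (∀ b : P, ΔR b = b ⊗ₜ 1 → ∀ u : P, s (b * u) = b * s u)},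
      (∀ φ (u : P), ((e φ) : P →ₗ[k] P) u
        = LinearMap.mul' k P (TensorProduct.map LinearMap.id φ.1 (ΔR u))) ∧
      (∀ s (a : A), ((e.symm s) : A →ₗ[k] P) a
        = LinearMap.mul' k P (TensorProduct.map LinearMap.id s.1 (σ a))) := by
  have hone' : ΔR 1 = (1 : P) ⊗ₜ (1 : A) := by rw [hone, Algebra.TensorProduct.one_def]
  have e3 : chiMap k A P ΔR ((1 : P) ⊗ₜ (1 : P)) = (1 : P) ⊗ₜ (1 : A) := by
    rw [aux_chi_tmul, hone', LinearMap.mulLeft_one, LinearMap.rTensor_id, LinearMap.id_apply]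
  refine ⟨{
    toFun := fun φ => ⟨LinearMap.mul' k P ∘ₗ TensorProduct.map LinearMap.id φ.1 ∘ₗ ΔR,
      by
        intro u
        simp only [LinearMap.comp_apply]
        exact aux_fwd_coinv (k := k) ΔR hcoassoc hmul φ.1 φ.2.2 u,
      by
        simp only [LinearMap.comp_apply]
        rw [hone']
        simp [φ.2.1],
      by
        intro b hb u
        simp only [LinearMap.comp_apply]
        exact aux_fwd_blin (k := k) ΔR hmul φ.1 b hb u⟩
    invFun := fun s => ⟨LinearMap.mul' k P ∘ₗ TensorProduct.map LinearMap.id s.1 ∘ₗ σ,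
      by
        obtain ⟨h, hh⟩ := aux_factor (k := k) (chiMap k A P ΔR)
          (LinearMap.mul' k P ∘ₗ TensorProduct.map LinearMap.id s.1) hfree
          (aux_ker_chi_le_ker_g (k := k) ΔR hcounit hexact s.1 s.2.2.2)
        simp only [LinearMap.comp_apply]
        have e1 := LinearMap.congr_fun hh (σ 1)
        have e2 := LinearMap.congr_fun hh ((1 : P) ⊗ₜ[k] (1 : P))
        simp only [LinearMap.comp_apply] at e1 e2
        rw [← e1, hσ 1, ← e3, e2]
        simp [s.2.2.1],
      by
        intro a
        obtain ⟨h, hh⟩ := aux_factor (k := k) (chiMap k A P ΔR)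
          (LinearMap.mul' k P ∘ₗ TensorProduct.map LinearMap.id s.1) hfree
          (aux_ker_chi_le_ker_g (k := k) ΔR hcounit hexact s.1 s.2.2.2)
        simp only [LinearMap.comp_apply]
        exact aux_bwd_cov (k := k) ΔR hcoassoc hone hmul σ hσ s.1 s.2.1 h hh a⟩
    left_inv := by
      intro φ
      apply Subtype.ext
      apply LinearMap.ext
      intro a
      simp only [LinearMap.comp_apply]
      exact aux_linv (k := k) ΔR σ hσ φ.1 a
    right_inv := by
      intro s
      obtain ⟨h, hh⟩ := aux_factor (k := k) (chiMap k A P ΔR)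
        (LinearMap.mul' k P ∘ₗ TensorProduct.map LinearMap.id s.1) hfree
        (aux_ker_chi_le_ker_g (k := k) ΔR hcounit hexact s.1 s.2.2.2)
      apply Subtype.ext
      apply LinearMap.ext
      intro u
      simp only [LinearMap.comp_apply]
      exact aux_rinv (k := k) ΔR hone σ hσ s.1 h hh u }, ?_, ?_⟩
  · intro φ u
    rfl
  · intro s a
    rfl
end
end

section
/- If a quantum principal bundle P(B,A) admits a cross section s : P → B which is an algebra map, then Φ = mult ∘ (s ⊗_B id) ∘ τ : A → P is a trivialisation (convolution invertible intertwiner with Φ(1)=1), and Θ = (s ⊗ id) ∘ Δ_R : P → B ⊗ A is an algebra isomorphism with inverse b ⊗ a ↦ b s(τ⁽¹⁾(a)) τ⁽²⁾(a). -/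
/-!
Put `L = mult ∘ (s ⊗ id) : P ⊗ P → P`, so that `Φ = L ∘ σ`. As `s` is an algebra map fixing `B`,
`L` kills `P B² P`; by the counit axiom `ker χ ⊆ ker mult`, so exactness says that `L` kills
`ker χ`, i.e. `L` factors through `χ` via its section `u ⊗ a ↦ u σ(a)`. On `1 ⊗ u` this
factorisation reads `s(u₀) Φ(u₁) = u`: `Θ` is injective, with the stated left inverse.
Since `Θ ∘ L = (s ⊗ id) ∘ χ`, we get `Θ (Φ a) = 1 ⊗ a`. Injectivity of the algebra map `Θ` then
makes `Φ` an algebra map, so `Φ ∘ S` is its convolution inverse; and as `Θ` intertwines `Δ_R`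
with `id ⊗ Δ`, injectivity of `Θ ⊗ id` turns `Θ (Φ a) = 1 ⊗ a` into `Δ_R ∘ Φ = (Φ ⊗ id) ∘ Δ`.
-/

open TensorProduct

noncomputable section

variable (k : Type*) [Field k]

variable (A P : Type*) [Ring A] [HopfAlgebra k A] [Ring P] [Algebra k P]

section

open WithConv

variable {k A P}

theorem conv_eq_convMul {C R : Type*} [AddCommMonoid C] [Module k C] [Coalgebra k C]
    [Semiring R] [Algebra k R] (f g : C →ₗ[k] R) :
    conv k f g = (toConv f * toConv g).ofConv := by
  rw [LinearMap.convMul_def]; rfl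

theorem conv_comp_antipode_eq_convOne {H R : Type*} [Semiring H] [HopfAlgebra k H] [Semiring R]
    [Algebra k R] (f : H →ₐ[k] R) :
    conv k f.toLinearMap (f.toLinearMap ∘ₗ HopfAlgebra.antipode k) = convOne k := by
  calc conv k f.toLinearMap (f.toLinearMap ∘ₗ HopfAlgebra.antipode k)
      = f.toLinearMap ∘ₗ (toConv LinearMap.id * toConv (HopfAlgebra.antipode k) :
          WithConv (H →ₗ[k] H)).ofConv := by
        rw [conv_eq_convMul, LinearMap.algHom_comp_convMul_distrib]; rfl
    _ = convOne k := by rw [LinearMap.id_mul_antipode]; ext; simp [convOne]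

theorem conv_antipode_comp_eq_convOne {H R : Type*} [Semiring H] [HopfAlgebra k H] [Semiring R]
    [Algebra k R] (f : H →ₐ[k] R) :
    conv k (f.toLinearMap ∘ₗ HopfAlgebra.antipode k) f.toLinearMap = convOne k := by
  calc conv k (f.toLinearMap ∘ₗ HopfAlgebra.antipode k) f.toLinearMap
      = f.toLinearMap ∘ₗ (toConv (HopfAlgebra.antipode k) * toConv LinearMap.id :
          WithConv (H →ₗ[k] H)).ofConv := by
        rw [conv_eq_convMul, LinearMap.algHom_comp_convMul_distrib]; rfl
    _ = convOne k := by rw [LinearMap.antipode_mul_id]; ext; simp [convOne]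

theorem rid_map_tmul_one_mul {C : Type*} [Semiring C] [Algebra k C] (f : C →ₗ[k] k) (u : P)
    (w : P ⊗[k] C) :
    TensorProduct.rid k P (TensorProduct.map LinearMap.id f ((u ⊗ₜ 1) * w))
      = u * TensorProduct.rid k P (TensorProduct.map LinearMap.id f w) := by
  induction w using TensorProduct.induction_on with
  | zero => simp
  | tmul p a => simp [Algebra.smul_def, Algebra.commutes, mul_assoc]
  | add x y hx hy => simp only [mul_add, map_add, hx, hy]

def sectionMul (s : P →ₐ[k] P) : P ⊗[k] P →ₗ[k] P :=
  LinearMap.mul' k P ∘ₗ TensorProduct.map s.toLinearMap LinearMap.id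

@[simp]
theorem sectionMul_tmul (s : P →ₐ[k] P) (u v : P) : sectionMul s (u ⊗ₜ v) = s u * v := by
  simp [sectionMul]

theorem sectionMul_tmul_one_mul (s : P →ₐ[k] P) (u : P) (x : P ⊗[k] P) :
    sectionMul s ((u ⊗ₜ 1) * x) = s u * sectionMul s x := by
  induction x using TensorProduct.induction_on with
  | zero => simp
  | tmul p q => simp [mul_assoc]
  | add x y hx hy => simp only [mul_add, map_add, hx, hy]

section Chi

variable (ΔR : P →ₗ[k] P ⊗[k] A)

theorem chiMap_tmul (u v : P) : chiMap k A P ΔR (u ⊗ₜ v) = (u ⊗ₜ 1) * ΔR v := by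
  simp only [chiMap, LinearMap.comp_apply, TensorProduct.map_tmul, LinearEquiv.coe_coe,
    LinearMap.id_apply]
  induction ΔR v using TensorProduct.induction_on with
  | zero => simp
  | tmul p a => simp [LinearMap.mul'_apply]
  | add x y hx hy => simp only [tmul_add, map_add, mul_add, hx, hy]

theorem chiMap_tmul_one_mul (u : P) (x : P ⊗[k] P) :
    chiMap k A P ΔR ((u ⊗ₜ 1) * x) = (u ⊗ₜ 1) * chiMap k A P ΔR x := by
  induction x using TensorProduct.induction_on with
  | zero => simp
  | tmul p q =>
    rw [Algebra.TensorProduct.tmul_mul_tmul, one_mul, chiMap_tmul, chiMap_tmul, ← mul_assoc,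
      Algebra.TensorProduct.tmul_mul_tmul, one_mul]
  | add x y hx hy => simp only [mul_add, map_add, hx, hy]

theorem ker_chiMap_le_ker_mul'
    (hcounit : ∀ u : P, TensorProduct.map LinearMap.id Coalgebra.counit (ΔR u) = u ⊗ₜ (1 : k)) :
    LinearMap.ker (chiMap k A P ΔR) ≤ LinearMap.ker (LinearMap.mul' k P) := by
  have hmul' : ∀ x, LinearMap.mul' k P x = TensorProduct.rid k P
      (TensorProduct.map LinearMap.id Coalgebra.counit (chiMap k A P ΔR x)) := by
    intro x
    induction x using TensorProduct.induction_on with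
    | zero => simp
    | tmul u v => simp [chiMap_tmul, rid_map_tmul_one_mul, hcounit]
    | add x y hx hy => simp only [map_add, hx, hy]
  intro x hx
  rw [LinearMap.mem_ker] at hx ⊢
  rw [hmul', hx, map_zero, map_zero]

theorem sectionMul_map_mulLeft_mulRight_of_mem_BBsub (s : P →ₐ[k] P)
    (hs : ∀ b : P, ΔR b = b ⊗ₜ 1 → s b = b) (u v : P) {y : P ⊗[k] P}
    (hy : y ∈ BBsub k A P ΔR) :
    sectionMul s (TensorProduct.map (LinearMap.mulLeft k u) (LinearMap.mulRight k v) y)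
      = s u * LinearMap.mul' k P y * v := by
  induction hy using Submodule.span_induction with
  | mem z hz =>
    obtain ⟨b, c, hb, -, rfl⟩ := hz
    simp [hs b hb, mul_assoc]
  | zero => simp
  | add y z _ _ hy hz => simp only [map_add, hy, hz, add_mul, mul_add]
  | smul c y _ hy => simp only [map_smul, hy, smul_mul_assoc, mul_smul_comm]

theorem ker_chiMap_le_ker_sectionMul
    (hcounit : ∀ u : P, TensorProduct.map LinearMap.id Coalgebra.counit (ΔR u) = u ⊗ₜ (1 : k))
    (hexact : LinearMap.ker (chiMap k A P ΔR) ⊓ LinearMap.ker (LinearMap.mul' k P)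
      = PB2P k A P ΔR)
    (s : P →ₐ[k] P) (hs : ∀ b : P, ΔR b = b ⊗ₜ 1 → s b = b) :
    LinearMap.ker (chiMap k A P ΔR) ≤ LinearMap.ker (sectionMul s) := by
  rw [← inf_eq_left.mpr (ker_chiMap_le_ker_mul' ΔR hcounit), hexact, PB2P, Submodule.span_le]
  rintro _ ⟨u, v, x, ⟨hxBB, hxμ⟩, rfl⟩
  rw [SetLike.mem_coe, LinearMap.mem_ker] at hxμ ⊢
  rw [sectionMul_map_mulLeft_mulRight_of_mem_BBsub ΔR s hs u v hxBB, hxμ, mul_zero, zero_mul]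

def chiSection (σ : A →ₗ[k] P ⊗[k] P) : P ⊗[k] A →ₗ[k] P ⊗[k] P :=
  TensorProduct.lift ((LinearMap.mul k (P ⊗[k] P)).compl₁₂
    (Algebra.TensorProduct.includeLeft : P →ₐ[k] P ⊗[k] P).toLinearMap σ)

@[simp]
theorem chiSection_tmul (σ : A →ₗ[k] P ⊗[k] P) (u : P) (a : A) :
    chiSection σ (u ⊗ₜ a) = (u ⊗ₜ 1) * σ a := by
  simp [chiSection]

theorem chiMap_chiSection {σ : A →ₗ[k] P ⊗[k] P}
    (hσ : ∀ a : A, chiMap k A P ΔR (σ a) = (1 : P) ⊗ₜ a) (w : P ⊗[k] A) :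
    chiMap k A P ΔR (chiSection σ w) = w := by
  induction w using TensorProduct.induction_on with
  | zero => simp
  | tmul u a => simp [chiMap_tmul_one_mul, hσ]
  | add x y hx hy => simp only [map_add, hx, hy]

theorem sectionMul_chiSection_chiMap
    (hcounit : ∀ u : P, TensorProduct.map LinearMap.id Coalgebra.counit (ΔR u) = u ⊗ₜ (1 : k))
    (hexact : LinearMap.ker (chiMap k A P ΔR) ⊓ LinearMap.ker (LinearMap.mul' k P)
      = PB2P k A P ΔR)
    {σ : A →ₗ[k] P ⊗[k] P} (hσ : ∀ a : A, chiMap k A P ΔR (σ a) = (1 : P) ⊗ₜ a)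
    (s : P →ₐ[k] P) (hs : ∀ b : P, ΔR b = b ⊗ₜ 1 → s b = b) (x : P ⊗[k] P) :
    sectionMul s (chiSection σ (chiMap k A P ΔR x)) = sectionMul s x := by
  have hker : chiSection σ (chiMap k A P ΔR x) - x ∈ LinearMap.ker (chiMap k A P ΔR) := by
    rw [LinearMap.mem_ker, map_sub, chiMap_chiSection ΔR hσ, sub_self]
  have := ker_chiMap_le_ker_sectionMul ΔR hcounit hexact s hs hker
  rwa [LinearMap.mem_ker, map_sub, sub_eq_zero] at this

end Chi

def phiMap (s : P →ₐ[k] P) (σ : A →ₗ[k] P ⊗[k] P) : A →ₗ[k] P :=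
  sectionMul s ∘ₗ σ

def thetaMap (s : P →ₐ[k] P) (ΔR : P →ₐ[k] P ⊗[k] A) : P →ₐ[k] P ⊗[k] A :=
  (Algebra.TensorProduct.map s (AlgHom.id k A)).comp ΔR

section Theta

variable (ΔR : P →ₐ[k] P ⊗[k] A) (s : P →ₐ[k] P)

theorem thetaMap_apply (u : P) :
    thetaMap s ΔR u = TensorProduct.map s.toLinearMap LinearMap.id (ΔR u) := rfl

theorem thetaMap_mem_range_rTensor_coinvariants (hsB : ∀ u : P, ΔR (s u) = s u ⊗ₜ 1) (u : P) :
    thetaMap s ΔR u ∈ LinearMap.range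
      ((LinearMap.ker (ΔR.toLinearMap - (TensorProduct.mk k P A).flip 1)).subtype.rTensor A) := by
  have hs_mem : ∀ u, s.toLinearMap u
      ∈ LinearMap.ker (ΔR.toLinearMap - (TensorProduct.mk k P A).flip 1) := by
    simp [hsB]
  refine ⟨(s.toLinearMap.codRestrict _ hs_mem).rTensor A (ΔR u), ?_⟩
  rw [← LinearMap.comp_apply, ← LinearMap.rTensor_comp, LinearMap.subtype_comp_codRestrict]
  rfl

theorem thetaMap_of_coinvariant (hs : ∀ b : P, ΔR b = b ⊗ₜ 1 → s b = b) {b : P}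
    (hb : ΔR b = b ⊗ₜ 1) : thetaMap s ΔR b = b ⊗ₜ 1 := by
  simp [thetaMap_apply, hb, hs b hb]

theorem thetaMap_sectionMul (hsB : ∀ u : P, ΔR (s u) = s u ⊗ₜ 1)
    (hs : ∀ b : P, ΔR b = b ⊗ₜ 1 → s b = b) (x : P ⊗[k] P) :
    thetaMap s ΔR (sectionMul s x)
      = TensorProduct.map s.toLinearMap LinearMap.id (chiMap k A P ΔR.toLinearMap x) := by
  induction x using TensorProduct.induction_on with
  | zero => simp
  | tmul u v =>
    rw [sectionMul_tmul, map_mul, thetaMap_of_coinvariant ΔR s hs (hsB u), chiMap_tmul]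
    exact (map_mul (Algebra.TensorProduct.map s (AlgHom.id k A)) (u ⊗ₜ 1) (ΔR v)).symm
  | add x y hx hy => simp only [map_add, hx, hy]

theorem mul'_map_phiMap_thetaMap
    (hcounit : ∀ u : P, TensorProduct.map LinearMap.id Coalgebra.counit (ΔR u) = u ⊗ₜ (1 : k))
    (hexact : LinearMap.ker (chiMap k A P ΔR.toLinearMap) ⊓ LinearMap.ker (LinearMap.mul' k P)
      = PB2P k A P ΔR.toLinearMap)
    {σ : A →ₗ[k] P ⊗[k] P} (hσ : ∀ a : A, chiMap k A P ΔR.toLinearMap (σ a) = (1 : P) ⊗ₜ a)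
    (hs : ∀ b : P, ΔR b = b ⊗ₜ 1 → s b = b) (u : P) :
    (LinearMap.mul' k P ∘ₗ TensorProduct.map LinearMap.id (phiMap s σ)) (thetaMap s ΔR u) = u := by
  have hmul'_map : ∀ w : P ⊗[k] A,
      LinearMap.mul' k P (TensorProduct.map LinearMap.id (phiMap s σ)
        (TensorProduct.map s.toLinearMap LinearMap.id w)) = sectionMul s (chiSection σ w) := by
    intro w
    induction w using TensorProduct.induction_on with
    | zero => simp
    | tmul p a => simp [sectionMul_tmul_one_mul, phiMap]
    | add x y hx hy => simp only [map_add, hx, hy]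
  have hchi : ΔR u = chiMap k A P ΔR.toLinearMap (1 ⊗ₜ u) := by
    rw [chiMap_tmul, ← Algebra.TensorProduct.one_def, one_mul]; rfl
  rw [LinearMap.comp_apply, thetaMap_apply, hmul'_map, hchi,
    sectionMul_chiSection_chiMap _ hcounit hexact hσ s hs, sectionMul_tmul, map_one, one_mul]

theorem thetaMap_phiMap {σ : A →ₗ[k] P ⊗[k] P}
    (hσ : ∀ a : A, chiMap k A P ΔR.toLinearMap (σ a) = (1 : P) ⊗ₜ a)
    (hsB : ∀ u : P, ΔR (s u) = s u ⊗ₜ 1) (hs : ∀ b : P, ΔR b = b ⊗ₜ 1 → s b = b) (a : A) :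
    thetaMap s ΔR (phiMap s σ a) = 1 ⊗ₜ a := by
  rw [phiMap, LinearMap.comp_apply, thetaMap_sectionMul ΔR s hsB hs, hσ]
  simp

theorem thetaMap_injective
    (hcounit : ∀ u : P, TensorProduct.map LinearMap.id Coalgebra.counit (ΔR u) = u ⊗ₜ (1 : k))
    (hexact : LinearMap.ker (chiMap k A P ΔR.toLinearMap) ⊓ LinearMap.ker (LinearMap.mul' k P)
      = PB2P k A P ΔR.toLinearMap)
    {σ : A →ₗ[k] P ⊗[k] P} (hσ : ∀ a : A, chiMap k A P ΔR.toLinearMap (σ a) = (1 : P) ⊗ₜ a)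
    (hs : ∀ b : P, ΔR b = b ⊗ₜ 1 → s b = b) :
    Function.Injective (thetaMap s ΔR) :=
  Function.LeftInverse.injective (mul'_map_phiMap_thetaMap ΔR s hcounit hexact hσ hs)

theorem phiMap_one
    (hcounit : ∀ u : P, TensorProduct.map LinearMap.id Coalgebra.counit (ΔR u) = u ⊗ₜ (1 : k))
    (hexact : LinearMap.ker (chiMap k A P ΔR.toLinearMap) ⊓ LinearMap.ker (LinearMap.mul' k P)
      = PB2P k A P ΔR.toLinearMap)
    {σ : A →ₗ[k] P ⊗[k] P} (hσ : ∀ a : A, chiMap k A P ΔR.toLinearMap (σ a) = (1 : P) ⊗ₜ a)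
    (hsB : ∀ u : P, ΔR (s u) = s u ⊗ₜ 1) (hs : ∀ b : P, ΔR b = b ⊗ₜ 1 → s b = b) :
    phiMap s σ 1 = 1 :=
  thetaMap_injective ΔR s hcounit hexact hσ hs <| by
    rw [thetaMap_phiMap ΔR s hσ hsB hs, map_one, Algebra.TensorProduct.one_def]

theorem phiMap_mul
    (hcounit : ∀ u : P, TensorProduct.map LinearMap.id Coalgebra.counit (ΔR u) = u ⊗ₜ (1 : k))
    (hexact : LinearMap.ker (chiMap k A P ΔR.toLinearMap) ⊓ LinearMap.ker (LinearMap.mul' k P)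
      = PB2P k A P ΔR.toLinearMap)
    {σ : A →ₗ[k] P ⊗[k] P} (hσ : ∀ a : A, chiMap k A P ΔR.toLinearMap (σ a) = (1 : P) ⊗ₜ a)
    (hsB : ∀ u : P, ΔR (s u) = s u ⊗ₜ 1) (hs : ∀ b : P, ΔR b = b ⊗ₜ 1 → s b = b) (a b : A) :
    phiMap s σ (a * b) = phiMap s σ a * phiMap s σ b :=
  thetaMap_injective ΔR s hcounit hexact hσ hs <| by
    simp only [map_mul (thetaMap s ΔR), thetaMap_phiMap ΔR s hσ hsB hs,
      Algebra.TensorProduct.tmul_mul_tmul, one_mul]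

theorem thetaMap_mul_phiMap {σ : A →ₗ[k] P ⊗[k] P}
    (hσ : ∀ a : A, chiMap k A P ΔR.toLinearMap (σ a) = (1 : P) ⊗ₜ a)
    (hsB : ∀ u : P, ΔR (s u) = s u ⊗ₜ 1) (hs : ∀ b : P, ΔR b = b ⊗ₜ 1 → s b = b)
    {b : P} (hb : ΔR b = b ⊗ₜ 1) (a : A) :
    thetaMap s ΔR (b * phiMap s σ a) = b ⊗ₜ a := by
  rw [map_mul, thetaMap_of_coinvariant ΔR s hs hb, thetaMap_phiMap ΔR s hσ hsB hs,
    Algebra.TensorProduct.tmul_mul_tmul, mul_one, one_mul]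

theorem rTensor_thetaMap_coaction
    (hcoassoc : ∀ u : P, TensorProduct.map ΔR.toLinearMap LinearMap.id (ΔR u)
      = (TensorProduct.assoc k P A A).symm (TensorProduct.map LinearMap.id Coalgebra.comul (ΔR u)))
    (u : P) :
    (thetaMap s ΔR).toLinearMap.rTensor A (ΔR u)
      = (TensorProduct.assoc k P A A).symm
          (TensorProduct.map LinearMap.id Coalgebra.comul (thetaMap s ΔR u)) := by
  have hnat : TensorProduct.map (TensorProduct.map s.toLinearMap LinearMap.id) LinearMap.id ∘ₗ
        (TensorProduct.assoc k P A A).symm.toLinearMap ∘ₗ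
          TensorProduct.map LinearMap.id Coalgebra.comul
      = (TensorProduct.assoc k P A A).symm.toLinearMap ∘ₗ
          TensorProduct.map LinearMap.id Coalgebra.comul ∘ₗ
            TensorProduct.map s.toLinearMap LinearMap.id := by
    rw [← LinearMap.comp_assoc, TensorProduct.map_map_comp_assoc_symm_eq,
      LinearMap.comp_assoc, ← TensorProduct.map_comp, ← TensorProduct.map_comp]
    simp
  have hΘ : (thetaMap s ΔR).toLinearMap
      = TensorProduct.map s.toLinearMap LinearMap.id ∘ₗ ΔR.toLinearMap := rfl
  rw [hΘ, LinearMap.rTensor_comp, LinearMap.comp_apply, LinearMap.rTensor, LinearMap.rTensor,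
    hcoassoc]
  exact LinearMap.congr_fun hnat (ΔR u)

theorem coaction_phiMap
    (hcounit : ∀ u : P, TensorProduct.map LinearMap.id Coalgebra.counit (ΔR u) = u ⊗ₜ (1 : k))
    (hcoassoc : ∀ u : P, TensorProduct.map ΔR.toLinearMap LinearMap.id (ΔR u)
      = (TensorProduct.assoc k P A A).symm (TensorProduct.map LinearMap.id Coalgebra.comul (ΔR u)))
    (hexact : LinearMap.ker (chiMap k A P ΔR.toLinearMap) ⊓ LinearMap.ker (LinearMap.mul' k P)
      = PB2P k A P ΔR.toLinearMap)
    {σ : A →ₗ[k] P ⊗[k] P} (hσ : ∀ a : A, chiMap k A P ΔR.toLinearMap (σ a) = (1 : P) ⊗ₜ a)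
    (hsB : ∀ u : P, ΔR (s u) = s u ⊗ₜ 1) (hs : ∀ b : P, ΔR b = b ⊗ₜ 1 → s b = b) (a : A) :
    ΔR (phiMap s σ a) = TensorProduct.map (phiMap s σ) LinearMap.id (Coalgebra.comul a) := by
  have hleft : (LinearMap.mul' k P ∘ₗ TensorProduct.map LinearMap.id (phiMap s σ)) ∘ₗ
      (thetaMap s ΔR).toLinearMap = LinearMap.id :=
    LinearMap.ext (mul'_map_phiMap_thetaMap ΔR s hcounit hexact hσ hs)
  have hinj : Function.Injective ((thetaMap s ΔR).toLinearMap.rTensor A) := by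
    refine Function.LeftInverse.injective
      (g := (LinearMap.mul' k P ∘ₗ TensorProduct.map LinearMap.id (phiMap s σ)).rTensor A)
      fun x => ?_
    rw [← LinearMap.comp_apply, ← LinearMap.rTensor_comp, hleft, LinearMap.rTensor_id_apply]
  have hΘΦ : (thetaMap s ΔR).toLinearMap ∘ₗ phiMap s σ = TensorProduct.mk k P A 1 :=
    LinearMap.ext (thetaMap_phiMap ΔR s hσ hsB hs)
  have hunit : (TensorProduct.mk k P A 1).rTensor A
      = (TensorProduct.assoc k P A A).symm.toLinearMap ∘ₗ TensorProduct.mk k P (A ⊗[k] A) 1 := by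
    ext
    simp
  apply hinj
  rw [rTensor_thetaMap_coaction ΔR s hcoassoc, thetaMap_phiMap ΔR s hσ hsB hs,
    TensorProduct.map_tmul, LinearMap.id_apply, ← LinearMap.comp_apply,
    LinearMap.rTensor_comp_map, hΘΦ]
  exact (LinearMap.congr_fun hunit (Coalgebra.comul a)).symm

end Theta

end

/-- `σ` is any lift to `P ⊗ P` of the translation map `τ : A → P ⊗_B P`. -/
theorem algebra_section_implies_trivial
    (ΔR : P →ₗ[k] P ⊗[k] A)
    (hcounit : ∀ u : P, TensorProduct.map LinearMap.id Coalgebra.counit (ΔR u) = u ⊗ₜ (1 : k))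
    (hcoassoc : ∀ u : P, TensorProduct.map ΔR LinearMap.id (ΔR u)
      = (TensorProduct.assoc k P A A).symm (TensorProduct.map LinearMap.id Coalgebra.comul (ΔR u)))
    (hone : ΔR 1 = 1)
    (hmul : ∀ u v : P, ΔR (u * v) = ΔR u * ΔR v)
    (hexact : LinearMap.ker (chiMap k A P ΔR) ⊓ LinearMap.ker (LinearMap.mul' k P)
      = PB2P k A P ΔR)
    (σ : A →ₗ[k] P ⊗[k] P)
    (hσ : ∀ a : A, chiMap k A P ΔR (σ a) = (1 : P) ⊗ₜ a)
    (s : P →ₐ[k] P)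
    (hsB : ∀ u : P, ΔR (s u) = s u ⊗ₜ 1)
    (hsmod : ∀ b : P, ΔR b = b ⊗ₜ 1 → ∀ u : P, s (b * u) = b * s u) :
    (LinearMap.mul' k P ∘ₗ TensorProduct.map s.toLinearMap LinearMap.id ∘ₗ σ) 1 = 1 ∧
    (∀ a : A,
      ΔR ((LinearMap.mul' k P ∘ₗ TensorProduct.map s.toLinearMap LinearMap.id ∘ₗ σ) a)
        = TensorProduct.map
            (LinearMap.mul' k P ∘ₗ TensorProduct.map s.toLinearMap LinearMap.id ∘ₗ σ)
            LinearMap.id (Coalgebra.comul a)) ∧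
    (∃ Φinv : A →ₗ[k] P,
      conv k (LinearMap.mul' k P ∘ₗ TensorProduct.map s.toLinearMap LinearMap.id ∘ₗ σ)
          Φinv = convOne k ∧
      conv k Φinv
          (LinearMap.mul' k P ∘ₗ TensorProduct.map s.toLinearMap LinearMap.id ∘ₗ σ)
        = convOne k) ∧
    (∀ u : P,
      TensorProduct.map s.toLinearMap LinearMap.id (ΔR u)
        ∈ LinearMap.range
            ((LinearMap.ker
              (ΔR - (TensorProduct.mk k P A).flip 1)).subtype.rTensor A)) ∧
    (∀ u : P,
      (LinearMap.mul' k P ∘ₗ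
        TensorProduct.map LinearMap.id
          (LinearMap.mul' k P ∘ₗ TensorProduct.map s.toLinearMap LinearMap.id ∘ₗ σ))
        (TensorProduct.map s.toLinearMap LinearMap.id (ΔR u)) = u) ∧
    (∀ (b : P), ΔR b = b ⊗ₜ 1 → ∀ a : A,
      TensorProduct.map s.toLinearMap LinearMap.id
        (ΔR (b * (LinearMap.mul' k P ∘ₗ
            TensorProduct.map s.toLinearMap LinearMap.id ∘ₗ σ) a))
        = b ⊗ₜ a) := by
  let Δ : P →ₐ[k] P ⊗[k] A := AlgHom.ofLinearMap ΔR hone hmul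
  have hs : ∀ b : P, ΔR b = b ⊗ₜ 1 → s b = b := fun b hb => by simpa using hsmod b hb 1
  have hΦ1 := phiMap_one Δ s hcounit hexact hσ hsB hs
  let Φ : A →ₐ[k] P :=
    AlgHom.ofLinearMap (phiMap s σ) hΦ1 (phiMap_mul Δ s hcounit hexact hσ hsB hs)
  exact ⟨hΦ1, coaction_phiMap Δ s hcounit hcoassoc hexact hσ hsB hs,
    ⟨_, conv_comp_antipode_eq_convOne Φ, conv_antipode_comp_eq_convOne Φ⟩,
    thetaMap_mem_range_rTensor_coinvariants Δ s hsB,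
    mul'_map_phiMap_thetaMap Δ s hcounit hexact hσ hs,
    fun b hb => thetaMap_mul_phiMap Δ s hσ hsB hs hb⟩

end
end
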